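/- Let R be a subset of a commutative ring and let c be a λ-quiddity cycle over R of length m > 2. Then there exist n ≥ 1, quiddity cycles a₁,…,aₙ over R each of length > 2 and each irreducible over R, and dihedral group elements σ₁,…,σ_{n−1} (each of the appropriate length), such that c = ((((a₁ ⊕ a₂)^{σ₁} ⊕ a₃)^{σ₂} ⊕ …)^{σ_{n−2}} ⊕ aₙ)^{σ_{n−1}} (for n = 1 this means c = a₁). -/
import Mathlib


open Matrix

/-- The 2×2 matrix `[[x, -1], [1, 0]]` associated to an entry of a quiddity cycle. -/
def qMat {R : Type*} [CommRing R] (x : R) : Matrix (Fin 2) (Fin 2) R := !![x, -1; 1, 0]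

/-- `c` is a `lam`-quiddity cycle: the product `∏ [[cₜ,−1],[1,0]]` equals `lam • Id`. -/
def IsQC {R : Type*} [CommRing R] (lam : R) (c : List R) : Prop :=
  (c.map qMat).prod = lam • (1 : Matrix (Fin 2) (Fin 2) R)

/-- `a ⊕ b = (a₁+b_l, a₂, …, a_{k−1}, a_k+b₁, b₂, …, b_{l−1})`. -/
def oplus {R : Type*} [CommRing R] (a b : List R) : List R :=
  (a.head?.getD 0 + b.getLast?.getD 0) ::
    ((a.drop 1).dropLast ++ (a.getLast?.getD 0 + b.head?.getD 0) :: (b.drop 1).dropLast)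

/-- Dihedral equivalence: `a` is a cyclic rotation of `b` or of the reversal of `b`,
i.e. `a = b^σ` for some `σ` in the dihedral group acting on `n` points. -/
def DihEquiv {α : Type*} (a b : List α) : Prop :=
  ∃ i : ℕ, a = b.rotate i ∨ a = b.reverse.rotate i

/-- The action of a dihedral group element, encoded by a rotation amount and a reversal flag. -/
def applyDih {α : Type*} (p : ℕ × Bool) (c : List α) : List α :=
  if p.2 then c.reverse.rotate p.1 else c.rotate p.1

/-- `c` is a `lam`-quiddity cycle over the subset `S` of `R`, i.e. `lam ∈ {±1}`,
all entries of `c` lie in `S` and the defining matrix identity holds. -/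
def IsQCOn {R : Type*} [CommRing R] (S : Set R) (lam : R) (c : List R) : Prop :=
  (lam = 1 ∨ lam = -1) ∧ (∀ x ∈ c, x ∈ S) ∧ IsQC lam c

/-- `c` (a `lam`-quiddity cycle of length `> 2`) is reducible over `S`. -/
def ReducibleOn {R : Type*} [CommRing R] (S : Set R) (lam : R) (c : List R) : Prop :=
  ∃ (lam' lam'' : R) (a b : List R),
    IsQCOn S lam' a ∧ IsQCOn S lam'' b ∧
    2 < a.length ∧ 2 < b.length ∧ c.length = a.length + b.length - 2 ∧
    lam = -(lam' * lam'') ∧ DihEquiv c (oplus a b)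

/-- `c` is an irreducible quiddity cycle over `S`: a quiddity cycle of length `> 2`
which is not reducible over `S`. -/
def IrreducibleOn {R : Type*} [CommRing R] (S : Set R) (c : List R) : Prop :=
  ∃ lam : R, IsQCOn S lam c ∧ 2 < c.length ∧ ¬ ReducibleOn S lam c

namespace Stmt13
variable {R : Type*} [CommRing R]

def qInv (x : R) : Matrix (Fin 2) (Fin 2) R := !![0, 1; -1, x]

lemma qMul (x : R) : qMat x * qInv x = 1 := by
  simp [qMat, qInv, Matrix.mul_fin_two, Matrix.one_fin_two]

lemma qMul' (x : R) : qInv x * qMat x = 1 := by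
  simp [qMat, qInv, Matrix.mul_fin_two, Matrix.one_fin_two]

def dMat : Matrix (Fin 2) (Fin 2) R := !![1, 0; 0, -1]

lemma dD : (dMat : Matrix (Fin 2) (Fin 2) R) * dMat = 1 := by
  simp [dMat, Matrix.mul_fin_two, Matrix.one_fin_two]

lemma qT (x : R) : (qMat x)ᵀ = dMat * qMat x * dMat := by
  ext i j
  fin_cases i <;> fin_cases j <;>
    simp [qMat, dMat, Matrix.mul_apply, Fin.sum_univ_two]


lemma isQC_rotate_one {lam : R} {c : List R} (h : IsQC lam c) : IsQC lam (c.rotate 1) := by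
  cases c with
  | nil => simpa using h
  | cons x c =>
    unfold IsQC at h ⊢
    rw [List.rotate_cons_succ, List.rotate_zero, List.map_append, List.prod_append]
    rw [List.map_cons, List.prod_cons] at h
    have : (List.map qMat c).prod * (List.map qMat [x]).prod
        = qInv x * (qMat x * (List.map qMat c).prod) * qMat x := by
      simp only [List.map_cons, List.map_nil, List.prod_cons, List.prod_nil, mul_one,
        ← mul_assoc, qMul', one_mul]
    rw [this, h, mul_smul_comm, smul_mul_assoc, mul_one, qMul']

lemma isQC_rotate {lam : R} {c : List R} (h : IsQC lam c) (i : ℕ) : IsQC lam (c.rotate i) := by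
  induction i generalizing c with
  | zero => simpa using h
  | succ n ih =>
    have := ih (isQC_rotate_one h)
    rwa [List.rotate_rotate, Nat.add_comm] at this

lemma prod_rev (c : List R) :
    ((c.reverse).map qMat).prod = dMat * ((c.map qMat).prod)ᵀ * dMat := by
  induction c with
  | nil => simp [dD]
  | cons x c ih =>
    rw [List.reverse_cons, List.map_append, List.prod_append, ih]
    simp only [List.map_cons, List.prod_cons, List.map_nil, List.prod_nil, mul_one,
      Matrix.transpose_mul, qT]
    rw [show dMat * ((List.map qMat c).prodᵀ * (dMat * qMat x * dMat)) * dMat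
        = dMat * (List.map qMat c).prodᵀ * dMat * qMat x * (dMat * dMat) from by
      noncomm_ring, dD, mul_one]

lemma isQC_reverse {lam : R} {c : List R} (h : IsQC lam c) : IsQC lam c.reverse := by
  unfold IsQC at h ⊢
  rw [prod_rev, h]
  rw [Matrix.transpose_smul, Matrix.transpose_one, mul_smul_comm, smul_mul_assoc, mul_one, dD]


lemma getLast_shape (h1 t : R) (M : List R) : (h1 :: (M ++ [t])).getLast?.getD 0 = t := by
  induction M generalizing h1 with
  | nil => simp
  | cons x M ih => rw [List.cons_append, List.getLast?_cons_cons]; exact ih x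

lemma oplus_concrete (a1 am b1 bl : R) (A B : List R) :
    oplus (a1 :: A ++ [am]) (b1 :: B ++ [bl]) = (a1 + bl) :: A ++ (am + b1) :: B := by
  simp [oplus, getLast_shape]

lemma oplus_eq {a b : List R} {a1 am b1 bl : R} {A B : List R}
    (ha : a = a1 :: A ++ [am]) (hb : b = b1 :: B ++ [bl]) :
    oplus a b = (a1 + bl) :: A ++ (am + b1) :: B := by
  subst ha hb; exact oplus_concrete _ _ _ _ _ _

lemma exists_shape {l : List R} (h : 2 ≤ l.length) :
    ∃ (h1 h2 : R) (M : List R), l = h1 :: M ++ [h2] := by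
  cases l with
  | nil => simp at h
  | cons x l' =>
    rcases l'.eq_nil_or_concat with rfl | ⟨M, t, rfl⟩
    · simp at h
    · exact ⟨x, t, M, by simp⟩

lemma oplus_length {a b : List R} (ha : 2 ≤ a.length) (hb : 2 ≤ b.length) :
    (oplus a b).length = a.length + b.length - 2 := by
  simp [oplus]
  omega

lemma rot_pref {l l1 l2 : List R} {n : ℕ} (h : l = l1 ++ l2) (hn : n = l1.length) :
    l.rotate n = l2 ++ l1 := by
  subst h hn; exact List.rotate_append_length_eq _ _

lemma oplus_swap {x y : List R} (hx : 2 ≤ x.length) (hy : 2 ≤ y.length) :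
    oplus x y = (oplus y x).rotate (y.length - 1) := by
  obtain ⟨x1, xl, X, rfl⟩ := exists_shape hx
  obtain ⟨y1, yl, Y, rfl⟩ := exists_shape hy
  rw [oplus_concrete, oplus_concrete,
    rot_pref (l1 := (y1 + xl) :: Y) (l2 := (yl + x1) :: X) (by simp) (by simp)]
  simp [add_comm]

lemma oplus_reverse {x y : List R} (hx : 2 ≤ x.length) (hy : 2 ≤ y.length) :
    (oplus x y).reverse = (oplus x.reverse y.reverse).rotate x.length := by
  obtain ⟨x1, xl, X, rfl⟩ := exists_shape hx
  obtain ⟨y1, yl, Y, rfl⟩ := exists_shape hy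
  rw [oplus_concrete,
    oplus_eq (a1 := xl) (am := x1) (A := X.reverse) (b1 := yl) (bl := y1) (B := Y.reverse)
      (by simp) (by simp),
    rot_pref (l1 := (xl + y1) :: X.reverse ++ [x1 + yl]) (l2 := Y.reverse)
      (by simp) (by simp)]
  simp

lemma split_at : ∀ (k : ℕ) (l : List R), k + 2 ≤ l.length →
    ∃ (P : List R) (d c : R) (Q : List R), l = P ++ d :: c :: Q ∧ P.length = k := by
  intro k
  induction k with
  | zero =>
    intro l hl
    match l, hl with
    | d :: c :: Q, _ => exact ⟨[], d, c, Q, rfl, rfl⟩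
  | succ k ih =>
    intro l hl
    match l, hl with
    | x :: l', hl =>
      obtain ⟨P, d, c, Q, rfl, hP⟩ := ih l' (by simp at hl ⊢; omega)
      exact ⟨x :: P, d, c, Q, rfl, by simp [hP]⟩


lemma eq_nil_or_append (l : List R) : l = [] ∨ ∃ L b, l = L ++ [b] := by
  rcases l.eq_nil_or_concat with rfl | ⟨L, b, rfl⟩
  · exact Or.inl rfl
  · exact Or.inr ⟨L, b, by simp⟩

lemma core (a x P Q : List R) (d c : R) (ha : 2 ≤ a.length) (hx : 2 ≤ x.length) :
    oplus a ((oplus (P ++ d :: c :: Q) x).rotate (P.length + 1)) =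
    (oplus ((oplus a ((P ++ d :: c :: Q).rotate (P.length + 1))).rotate (a.length + Q.length))
      x).rotate P.length := by
  obtain ⟨a1, am, A, rfl⟩ := exists_shape ha
  obtain ⟨x1, xl, X, rfl⟩ := exists_shape hx
  have hyrot : (P ++ d :: c :: Q).rotate (P.length + 1) = (c :: Q) ++ (P ++ [d]) :=
    rot_pref (by simp) (by simp)
  rw [hyrot]
  have he0 : oplus (a1 :: A ++ [am]) ((c :: Q) ++ (P ++ [d]))
      = (a1 + d) :: A ++ ((am + c) :: (Q ++ P)) := oplus_eq rfl (by simp)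
  rw [he0]
  have he : ((a1 + d) :: A ++ ((am + c) :: (Q ++ P))).rotate
        ((a1 :: A ++ [am]).length + Q.length)
      = P ++ ((a1 + d) :: A ++ ((am + c) :: Q)) :=
    rot_pref (by simp) (by simp only [List.length_append, List.length_cons, List.length_nil]; omega)
  rw [he]
  rcases P with _ | ⟨p0, P'⟩ <;> rcases eq_nil_or_append Q with rfl | ⟨Q', ql, rfl⟩
  · -- P = [], Q = []
    rw [oplus_eq (a := [] ++ d :: c :: []) (b := x1 :: X ++ [xl])
      (a1 := d) (am := c) (A := ([] : List R)) (b1 := x1) (bl := xl) (B := X) (by simp) rfl]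
    rw [rot_pref (l := (d + xl) :: [] ++ ((c + x1) :: X)) (n := List.length ([] : List R) + 1)
      (l1 := [(d + xl)]) (l2 := (c + x1) :: X) (by simp) (by simp)]
    rw [oplus_eq (a := a1 :: A ++ [am]) (b := ((c + x1) :: X) ++ [d + xl])
      (a1 := a1) (am := am) (A := A) (b1 := c + x1) (bl := d + xl) (B := X) rfl (by simp)]
    rw [oplus_eq (a := [] ++ ((a1 + d) :: A ++ ((am + c) :: []))) (b := x1 :: X ++ [xl])
      (a1 := a1 + d) (am := am + c) (A := A) (b1 := x1) (bl := xl) (B := X) (by simp) rfl]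
    simp [add_assoc]
  · -- P = [], Q = Q' ++ [ql]
    rw [oplus_eq (a := [] ++ d :: c :: (Q' ++ [ql])) (b := x1 :: X ++ [xl])
      (a1 := d) (am := ql) (A := c :: Q') (b1 := x1) (bl := xl) (B := X) (by simp) rfl]
    rw [rot_pref (l := (d + xl) :: (c :: Q') ++ ((ql + x1) :: X))
      (n := List.length ([] : List R) + 1)
      (l1 := [(d + xl)]) (l2 := (c :: Q') ++ ((ql + x1) :: X)) (by simp) (by simp)]
    rw [oplus_eq (a := a1 :: A ++ [am]) (b := ((c :: Q') ++ ((ql + x1) :: X)) ++ [d + xl])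
      (a1 := a1) (am := am) (A := A) (b1 := c) (bl := d + xl)
      (B := Q' ++ ((ql + x1) :: X)) rfl (by simp)]
    rw [oplus_eq (a := [] ++ ((a1 + d) :: A ++ ((am + c) :: (Q' ++ [ql]))))
      (b := x1 :: X ++ [xl])
      (a1 := a1 + d) (am := ql) (A := A ++ ((am + c) :: Q')) (b1 := x1) (bl := xl)
      (B := X) (by simp) rfl]
    simp [add_assoc]
  · -- P = p0 :: P', Q = []
    rw [oplus_eq (a := (p0 :: P') ++ d :: c :: []) (b := x1 :: X ++ [xl])
      (a1 := p0) (am := c) (A := P' ++ [d]) (b1 := x1) (bl := xl) (B := X) (by simp) rfl]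
    rw [rot_pref (l := (p0 + xl) :: (P' ++ [d]) ++ ((c + x1) :: X))
      (n := (p0 :: P').length + 1)
      (l1 := (p0 + xl) :: (P' ++ [d])) (l2 := (c + x1) :: X) (by simp)
      (by simp only [List.length_cons, List.length_append, List.length_nil])]
    rw [oplus_eq (a := a1 :: A ++ [am]) (b := ((c + x1) :: X) ++ ((p0 + xl) :: (P' ++ [d])))
      (a1 := a1) (am := am) (A := A) (b1 := c + x1) (bl := d)
      (B := X ++ ((p0 + xl) :: P')) rfl (by simp)]
    rw [oplus_eq (a := (p0 :: P') ++ ((a1 + d) :: A ++ ((am + c) :: [])))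
      (b := x1 :: X ++ [xl])
      (a1 := p0) (am := am + c) (A := P' ++ ((a1 + d) :: A)) (b1 := x1) (bl := xl)
      (B := X) (by simp) rfl]
    rw [rot_pref (l := (p0 + xl) :: (P' ++ ((a1 + d) :: A)) ++ (((am + c) + x1) :: X))
      (n := (p0 :: P').length)
      (l1 := (p0 + xl) :: P') (l2 := ((a1 + d) :: A) ++ (((am + c) + x1) :: X)) (by simp)
      (by simp)]
    simp [add_assoc]
  · -- P = p0 :: P', Q = Q' ++ [ql]
    rw [oplus_eq (a := (p0 :: P') ++ d :: c :: (Q' ++ [ql])) (b := x1 :: X ++ [xl])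
      (a1 := p0) (am := ql) (A := P' ++ d :: c :: Q') (b1 := x1) (bl := xl) (B := X)
      (by simp) rfl]
    rw [rot_pref (l := (p0 + xl) :: (P' ++ d :: c :: Q') ++ ((ql + x1) :: X))
      (n := (p0 :: P').length + 1)
      (l1 := (p0 + xl) :: (P' ++ [d])) (l2 := (c :: Q') ++ ((ql + x1) :: X)) (by simp)
      (by simp only [List.length_cons, List.length_append, List.length_nil])]
    rw [oplus_eq (a := a1 :: A ++ [am])
      (b := ((c :: Q') ++ ((ql + x1) :: X)) ++ ((p0 + xl) :: (P' ++ [d])))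
      (a1 := a1) (am := am) (A := A) (b1 := c) (bl := d)
      (B := Q' ++ ((ql + x1) :: X) ++ ((p0 + xl) :: P')) rfl (by simp)]
    rw [oplus_eq (a := (p0 :: P') ++ ((a1 + d) :: A ++ ((am + c) :: (Q' ++ [ql]))))
      (b := x1 :: X ++ [xl])
      (a1 := p0) (am := ql) (A := P' ++ ((a1 + d) :: A) ++ ((am + c) :: Q'))
      (b1 := x1) (bl := xl) (B := X) (by simp) rfl]
    rw [rot_pref
      (l := (p0 + xl) :: (P' ++ ((a1 + d) :: A) ++ ((am + c) :: Q')) ++ ((ql + x1) :: X))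
      (n := (p0 :: P').length)
      (l1 := (p0 + xl) :: P')
      (l2 := ((a1 + d) :: A) ++ ((am + c) :: Q') ++ ((ql + x1) :: X)) (by simp) (by simp)]
    simp [add_assoc]


lemma applyDih_length {α : Type*} (p : ℕ × Bool) (c : List α) :
    (applyDih p c).length = c.length := by
  rcases p with ⟨j, _ | _⟩ <;> simp [applyDih]

lemma applyDih_comp {α : Type*} (p q : ℕ × Bool) (c : List α) :
    ∃ r, applyDih p (applyDih q c) = applyDih r c := by
  rcases p with ⟨j, _ | _⟩ <;> rcases q with ⟨i, _ | _⟩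
  · exact ⟨(i + j, false), by simp [applyDih, List.rotate_rotate]⟩
  · exact ⟨(i + j, true), by simp [applyDih, List.rotate_rotate]⟩
  · refine ⟨(c.length - i % c.length + j, true), ?_⟩
    simp only [applyDih, if_pos, if_neg, Bool.false_eq_true, ite_false, ite_true]
    rw [List.reverse_rotate, List.rotate_rotate]
  · refine ⟨(c.reverse.length - i % c.reverse.length + j, false), ?_⟩
    simp only [applyDih, ite_true, ite_false, Bool.false_eq_true]
    rw [List.reverse_rotate, List.reverse_reverse, List.rotate_rotate]

lemma applyDih_inv {α : Type*} (p : ℕ × Bool) (c : List α) :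
    ∃ q, applyDih q (applyDih p c) = c := by
  rcases p with ⟨j, _ | _⟩
  · obtain ⟨k, hk⟩ := (List.IsRotated.symm ⟨j, rfl⟩ : c.rotate j ~r c)
    exact ⟨(k, false), by simpa [applyDih] using hk⟩
  · obtain ⟨k, hk⟩ :=
      (List.IsRotated.symm ⟨c.reverse.length - j % c.reverse.length, rfl⟩ :
        c.rotate (c.reverse.length - j % c.reverse.length) ~r c)
    refine ⟨(k, true), ?_⟩
    simp only [applyDih, ite_true]
    rw [List.reverse_rotate, List.reverse_reverse, hk]

lemma isQCOn_applyDih {S : Set R} {lam : R} {c : List R} (h : IsQCOn S lam c)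
    (p : ℕ × Bool) : IsQCOn S lam (applyDih p c) := by
  obtain ⟨h1, h2, h3⟩ := h
  refine ⟨h1, ?_, ?_⟩
  · intro t ht
    apply h2
    rcases p with ⟨j, _ | _⟩ <;> simp [applyDih] at ht <;> exact ht
  · rcases p with ⟨j, _ | _⟩
    · simpa [applyDih] using isQC_rotate h3 j
    · simpa [applyDih] using isQC_rotate (isQC_reverse h3) j

lemma dihEquiv_applyDih {α : Type*} {a b : List α} (p : ℕ × Bool) (h : DihEquiv a b) :
    DihEquiv (applyDih p a) b := by
  obtain ⟨i, hi | hi⟩ := h <;> rcases p with ⟨j, _ | _⟩ <;> subst hi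
  · exact ⟨i + j, Or.inl (by simp [applyDih, List.rotate_rotate])⟩
  · refine ⟨b.length - i % b.length + j, Or.inr ?_⟩
    simp only [applyDih, ite_true]
    rw [List.reverse_rotate, List.rotate_rotate]
  · exact ⟨i + j, Or.inr (by simp [applyDih, List.rotate_rotate])⟩
  · refine ⟨b.reverse.length - i % b.reverse.length + j, Or.inl ?_⟩
    simp only [applyDih, ite_true]
    rw [List.reverse_rotate, List.reverse_reverse, List.rotate_rotate]

lemma dihEquiv_of_applyDih {α : Type*} {a b : List α} (p : ℕ × Bool)
    (h : DihEquiv (applyDih p a) b) : DihEquiv a b := by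
  obtain ⟨q, hq⟩ := applyDih_inv p a
  have := dihEquiv_applyDih q h
  rwa [hq] at this

lemma irr_applyDih {S : Set R} {c : List R} (h : IrreducibleOn S c) (p : ℕ × Bool) :
    IrreducibleOn S (applyDih p c) := by
  obtain ⟨lam, hq, hlen, hnr⟩ := h
  refine ⟨lam, isQCOn_applyDih hq p, by rwa [applyDih_length], ?_⟩
  intro hr
  apply hnr
  obtain ⟨l1, l2, u, v, h1, h2, h3, h4, h5, h6, h7⟩ := hr
  exact ⟨l1, l2, u, v, h1, h2, h3, h4, by rwa [applyDih_length] at h5, h6,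
    dihEquiv_of_applyDih p h7⟩


/-- Bounded decomposability into irreducible quiddity cycles. -/
def IsDecB (S : Set R) (N : ℕ) (c : List R) : Prop :=
  ∃ (a₁ : List R) (rest : List ((ℕ × Bool) × List R)), IrreducibleOn S a₁ ∧ (∀ p ∈ rest, IrreducibleOn S p.2) ∧ rest.length ≤ N ∧
    c = rest.foldl (fun acc p => applyDih p.1 (oplus acc p.2)) a₁

def IsDec (S : Set R) (c : List R) : Prop := ∃ N, IsDecB S N c

lemma fold_concat (rest : List ((ℕ × Bool) × List R)) (q : (ℕ × Bool) × List R)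
    (a₁ : List R) :
    (rest ++ [q]).foldl (fun acc p => applyDih p.1 (oplus acc p.2)) a₁ =
      applyDih q.1 (oplus (rest.foldl (fun acc p => applyDih p.1 (oplus acc p.2)) a₁) q.2) := by
  simp [List.foldl_append]

lemma irr_three {S : Set R} {c : List R} (h : IrreducibleOn S c) : 3 ≤ c.length := by
  obtain ⟨lam, _, h2, _⟩ := h; omega

lemma fold_length {S : Set R} (rest : List ((ℕ × Bool) × List R)) :
    ∀ a₁ : List R, IrreducibleOn S a₁ → (∀ p ∈ rest, IrreducibleOn S p.2) →
      3 ≤ (rest.foldl (fun acc p => applyDih p.1 (oplus acc p.2)) a₁).length := by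
  induction rest using List.reverseRecOn with
  | nil => intro a₁ h1 _; simpa using irr_three h1
  | append_singleton rest q ih =>
    intro a₁ h1 h2
    rw [fold_concat, applyDih_length,
      oplus_length (by have := ih a₁ h1 (fun p hp => h2 p (by simp [hp])); omega)
        (by have := irr_three (h2 q (by simp)); omega)]
    have := ih a₁ h1 (fun p hp => h2 p (by simp [hp]))
    have := irr_three (h2 q (by simp))
    omega

lemma decB_length {S : Set R} {N : ℕ} {c : List R} (h : IsDecB S N c) : 3 ≤ c.length := by
  obtain ⟨a₁, rest, h1, h2, _, rfl⟩ := h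
  exact fold_length rest a₁ h1 h2

lemma dec_length {S : Set R} {c : List R} (h : IsDec S c) : 3 ≤ c.length := by
  obtain ⟨N, hN⟩ := h; exact decB_length hN

lemma decB_applyDih {S : Set R} {N : ℕ} {c : List R} (h : IsDecB S N c) (p : ℕ × Bool) :
    IsDecB S N (applyDih p c) := by
  obtain ⟨a₁, rest, h1, h2, hN, rfl⟩ := h
  rcases rest.eq_nil_or_concat with rfl | ⟨rest₀, q, hq⟩
  · exact ⟨applyDih p a₁, [], irr_applyDih h1 p, by simp, by simp, by simp⟩
  · rw [List.concat_eq_append] at hq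
    subst hq
    obtain ⟨r, hr⟩ := applyDih_comp p q.1
      (oplus (rest₀.foldl (fun acc p => applyDih p.1 (oplus acc p.2)) a₁) q.2)
    refine ⟨a₁, rest₀ ++ [(r, q.2)], h1, ?_, by simpa using hN, ?_⟩
    · intro p' hp'
      rcases List.mem_append.1 hp' with hp' | hp'
      · exact h2 p' (by simp [hp'])
      · simp at hp'
        rw [hp']
        exact h2 q (by simp)
    · rw [fold_concat, fold_concat, ← hr]

lemma dec_applyDih {S : Set R} {c : List R} (h : IsDec S c) (p : ℕ × Bool) :
    IsDec S (applyDih p c) := by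
  obtain ⟨N, hN⟩ := h; exact ⟨N, decB_applyDih hN p⟩

lemma dec_rotate {S : Set R} {c : List R} (h : IsDec S c) (k : ℕ) : IsDec S (c.rotate k) := by
  simpa [applyDih] using dec_applyDih h (k, false)

lemma dec_oplus_irr {S : Set R} {a z : List R} (h : IsDec S a) (hz : IrreducibleOn S z) :
    IsDec S (oplus a z) := by
  obtain ⟨N, a₁, rest, h1, h2, hN, rfl⟩ := h
  refine ⟨N + 1, a₁, rest ++ [((0, false), z)], h1, ?_, by simp; omega, ?_⟩
  · intro p hp
    rcases List.mem_append.1 hp with hp | hp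
    · exact h2 p hp
    · simp at hp; subst hp; exact hz
  · rw [fold_concat]; simp [applyDih]


lemma dec_oplus {S : Set R} :
    ∀ (N : ℕ) (b : List R), IsDecB S N b → ∀ a, IsDec S a → IsDec S (oplus a b) := by
  intro N
  induction N with
  | zero =>
    intro b hb a ha
    obtain ⟨b₁, rest, h1, h2, hN, rfl⟩ := hb
    have : rest = [] := List.length_eq_zero_iff.1 (by omega)
    subst this
    exact dec_oplus_irr ha h1
  | succ N ih =>
    intro b hb a ha
    obtain ⟨b₁, rest, h1, h2, hN, rfl⟩ := hb
    rcases rest.eq_nil_or_concat with rfl | ⟨rest₀, q, hq⟩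
    · exact dec_oplus_irr ha h1
    · rw [List.concat_eq_append] at hq; subst hq
      rcases q with ⟨⟨j, flag⟩, z⟩
      rw [fold_concat]
      set B := rest₀.foldl (fun acc p => applyDih p.1 (oplus acc p.2)) b₁ with hBdef
      have hB : IsDecB S N B :=
        ⟨b₁, rest₀, h1, fun p hp => h2 p (by simp [hp]), by simp at hN; omega, rfl⟩
      have hz : IrreducibleOn S z := by
        have := h2 ((j, flag), z) (by simp)
        exact this
      have key : ∀ (B' z' : List R), IsDecB S N B' → IrreducibleOn S z' → ∀ i,
          IsDec S (oplus a ((oplus B' z').rotate i)) := by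
        intro B' z' hB' hz' i
        have hBl : 3 ≤ B'.length := decB_length hB'
        have hzl : 3 ≤ z'.length := irr_three hz'
        have hal : 3 ≤ a.length := dec_length ha
        obtain ⟨n, hn⟩ : ∃ n, n = B'.length + z'.length - 2 := ⟨_, rfl⟩
        have hw : (oplus B' z').length = n := by
          rw [oplus_length (by omega) (by omega), hn]
        have hn0 : 0 < n := by omega
        have hrot : (oplus B' z').rotate i = (oplus B' z').rotate (i % n) := by
          conv_lhs => rw [← List.rotate_mod]
          rw [hw]
        set i' := i % n with hi'def
        have hi' : i' < n := Nat.mod_lt _ hn0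
        rw [hrot]
        by_cases hcase : 1 ≤ i' ∧ i' < B'.length
        · obtain ⟨P, dd, cc, Q, hsplit, hP⟩ := split_at (i' - 1) B' (by omega)
          have hco := core a z' P Q dd cc (by omega) (by omega)
          rw [← hsplit, show P.length + 1 = i' from by omega] at hco
          rw [hco]
          have hd1 : IsDec S (oplus a (B'.rotate i')) :=
            ih _ (by simpa [applyDih] using decB_applyDih hB' (i', false)) a ha
          exact dec_rotate (dec_oplus_irr (dec_rotate hd1 _) hz') _
        · have hor : i' = 0 ∨ B'.length ≤ i' := by omega
          have hswap : oplus B' z' = (oplus z' B').rotate (z'.length - 1) :=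
            oplus_swap (by omega) (by omega)
          have hzB : (oplus z' B').length = n := by
            rw [oplus_length (by omega) (by omega)]; omega
          obtain ⟨t0, ht0def⟩ :
              ∃ t0, t0 = if i' = 0 then z'.length - 1 else i' + z'.length - 1 - n := ⟨_, rfl⟩
          have ht0 : 1 ≤ t0 ∧ t0 + 1 ≤ z'.length := by
            rcases hor with h0 | h0
            · simp [ht0def, h0]; omega
            · have h0' : ¬ i' = 0 := by omega
              simp [ht0def, h0']; omega
          have hmod : (z'.length - 1 + i') % n = t0 := by
            rcases hor with h0 | h0
            · rw [ht0def]; simp [h0]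
              exact Nat.mod_eq_of_lt (by omega)
            · have h0' : ¬ i' = 0 := by omega
              have heq : z'.length - 1 + i' = n + t0 := by
                rw [ht0def]; simp [h0']; omega
              rw [heq, Nat.add_mod_left]
              exact Nat.mod_eq_of_lt (by omega)
          have hrw : (oplus B' z').rotate i' = (oplus z' B').rotate t0 := by
            rw [hswap, List.rotate_rotate, ← hmod, ← hzB, List.rotate_mod]
          rw [hrw]
          obtain ⟨P, dd, cc, Q, hsplit, hP⟩ := split_at (t0 - 1) z' (by omega)
          have hco := core a B' P Q dd cc (by omega) (by omega)
          rw [← hsplit, show P.length + 1 = t0 from by omega] at hco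
          rw [hco]
          have hzrot : IrreducibleOn S (z'.rotate t0) := by
            simpa [applyDih] using irr_applyDih hz' (t0, false)
          have hd1 : IsDec S (oplus a (z'.rotate t0)) := dec_oplus_irr ha hzrot
          exact dec_rotate (ih B' hB' _ (dec_rotate hd1 _)) _
      cases flag
      · simpa [applyDih] using key B z hB hz j
      · simp only [applyDih, ite_true]
        rw [oplus_reverse (by have := decB_length hB; omega) (by have := irr_three hz; omega),
          List.rotate_rotate]
        exact key B.reverse z.reverse
          (by simpa [applyDih] using decB_applyDih hB (0, true))
          (by simpa [applyDih] using irr_applyDih hz (0, true)) (B.length + j)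

end Stmt13

/-- Every `λ`-quiddity cycle `c` of length `m > 2` over a subset `S` admits a decomposition
`c = ((((a₁ ⊕ a₂)^{σ₁} ⊕ a₃)^{σ₂} ⊕ …)^{σ_{n−2}} ⊕ aₙ)^{σ_{n−1}}` into irreducible
quiddity cycles `a₁, …, aₙ` over `S`, each of length `> 2`, with dihedral elements
`σ₁, …, σ_{n−1}` (for `n = 1` this means `c = a₁`). -/
theorem stmt13 {R : Type*} [CommRing R] (S : Set R) (lam : R) (c : List R)
    (hc : IsQCOn S lam c) (hm : 2 < c.length) :
    ∃ (a₁ : List R) (rest : List ((ℕ × Bool) × List R)),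
      IrreducibleOn S a₁ ∧ (∀ p ∈ rest, IrreducibleOn S p.2) ∧
      c = rest.foldl (fun acc p => applyDih p.1 (oplus acc p.2)) a₁ := by
  suffices H : ∀ (n : ℕ) (c : List R) (lam : R), c.length ≤ n → IsQCOn S lam c →
      2 < c.length → Stmt13.IsDec S c by
    obtain ⟨N, a₁, rest, h1, h2, _, h4⟩ := H c.length c lam le_rfl hc hm
    exact ⟨a₁, rest, h1, h2, h4⟩
  intro n
  induction n with
  | zero => intro c lam h1 _ h3; omega
  | succ n ih =>
    intro c lam hcn hqc hm2
    by_cases hI : IrreducibleOn S c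
    · exact ⟨0, c, [], hI, by simp, by simp, rfl⟩
    · have hred : ReducibleOn S lam c := by
        by_contra h
        exact hI ⟨lam, hqc, hm2, h⟩
      obtain ⟨l1, l2, a, b, hqa, hqb, ha3, hb3, hlen, _, hde⟩ := hred
      have hda : Stmt13.IsDec S a := ih a l1 (by omega) hqa ha3
      have hdb : Stmt13.IsDec S b := ih b l2 (by omega) hqb hb3
      obtain ⟨Nb, hNb⟩ := hdb
      have hdab : Stmt13.IsDec S (oplus a b) := Stmt13.dec_oplus Nb b hNb a hda
      obtain ⟨i, hi | hi⟩ := hde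
      · rw [hi]
        exact Stmt13.dec_rotate hdab i
      · rw [hi]
        simpa [applyDih] using Stmt13.dec_applyDih hdab (i, true)
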